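/- The adjusted Shapley inconsistency value satisfies Rule-Involvement: if the rule-based inconsistency measure I satisfies monotonicity (I(B) ≤ I(B') whenever B ⊆ B') and Rule Consistency, and r ∈ B is a non-fact rule that is not free in B (i.e., r belongs to some minimal inconsistent subset of B), then S*_r^I(B) > 0. -/

import Mathlib

open scoped Classical

/-- A rule over atoms `A`: literals are pairs (atom, sign). -/
structure Rule (A : Type*) where
  body : Finset (A × Bool)
  head : A × Bool
deriving DecidableEq

abbrev RuleBase (A : Type*) := Finset (Rule A)

variable {A : Type*}

/-- The complement of a literal. -/
def litCompl (l : A × Bool) : A × Bool := (l.1, !l.2)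

/-- The fact with head `l` (empty body). -/
def factR (l : A × Bool) : Rule A := ⟨∅, l⟩

/-- The facts (empty-body rules) of a rule base. -/
noncomputable def facts [DecidableEq A] (B : RuleBase A) : RuleBase A :=
  B.filter (fun r => r.body = ∅)

/-- The proper (non-fact) rules of a rule base. -/
noncomputable def properRules [DecidableEq A] (B : RuleBase A) : RuleBase A :=
  B.filter (fun r => r.body ≠ ∅)

/-- A set of literals is closed w.r.t. a rule base. -/
def Closed (B : RuleBase A) (M : Set (A × Bool)) : Prop :=
  ∀ r ∈ B, (↑r.body ⊆ M) → r.head ∈ M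

/-- The minimal model: the smallest closed set of literals. -/
def minModel (B : RuleBase A) : Set (A × Bool) :=
  {l | ∀ M : Set (A × Bool), Closed B M → l ∈ M}

/-- A set of literals is consistent if it contains no complementary pair. -/
def ConsistentLits (M : Set (A × Bool)) : Prop :=
  ¬ ∃ a : A, (a, true) ∈ M ∧ (a, false) ∈ M

/-- A rule base is consistent if its minimal model is consistent. -/
def Consistent (B : RuleBase A) : Prop := ConsistentLits (minModel B)

/-- The minimal inconsistent subsets of a rule base. -/
def MI (B : RuleBase A) : Set (RuleBase A) :=
  { M | M ⊆ B ∧ ¬ Consistent M ∧ ∀ M' ⊂ M, Consistent M' }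

/-- `M` contains a complementary pair of facts. -/
def hasComplFactPair (M : RuleBase A) : Prop :=
  ∃ a : A, factR (a, true) ∈ M ∧ factR (a, false) ∈ M

/-- Minimal inconsistent subsets containing no complementary pair of facts. -/
def MIF (B : RuleBase A) : Set (RuleBase A) :=
  { M ∈ MI B | ¬ hasComplFactPair M }

/-- A formula is free in a rule base if it belongs to no minimal inconsistent subset. -/
def Free (r : Rule A) (B : RuleBase A) : Prop := ∀ M ∈ MI B, r ∉ M

/-- Rule consistency: the rules together with any consistent set of facts are consistent. -/
def RuleConsistent [DecidableEq A] (B : RuleBase A) : Prop :=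
  ∀ F' ⊆ facts B, Consistent F' → Consistent (properRules B ∪ F')

/-- The drastic inconsistency measure. -/
noncomputable def Idr (B : RuleBase A) : ℕ := if Consistent B then 0 else 1

/-- The rule-based drastic inconsistency measure. -/
noncomputable def IRBd (B : RuleBase A) : ℕ := if MIF B = ∅ then 0 else 1

/-- The rule-based MI-inconsistency measure. -/
noncomputable def IRBMI (B : RuleBase A) : ℕ := (MIF B).ncard

/-- The rule-based problematic inconsistency measure: number of distinct
    non-fact rules occurring in some element of `MIF B`. -/
noncomputable def IRBp (B : RuleBase A) : ℕ :=
  {r : Rule A | r.body ≠ ∅ ∧ ∃ M ∈ MIF B, r ∈ M}.ncard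

/-- Three truth values. -/
inductive TV | t | b | f
deriving DecidableEq

def TV.negv : TV → TV
  | .t => .f
  | .f => .t
  | .b => .b

/-- Value of a literal under a three-valued interpretation. -/
def litVal (v : A → TV) (l : A × Bool) : TV :=
  if l.2 then v l.1 else (v l.1).negv

/-- Designated truth values. -/
def TV.des : TV → Prop
  | .f => False
  | _ => True

/-- Three-valued satisfaction of a rule. -/
def sat3 (v : A → TV) (r : Rule A) : Prop :=
  (∀ l ∈ r.body, (litVal v l).des) → (litVal v r.head).des

/-- The rule-based contension inconsistency measure. -/
noncomputable def IRBc (B : RuleBase A) : ℕ :=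
  sInf { n : ℕ | ∃ v : A → TV,
    (∀ M ∈ MIF B, ∀ r ∈ M, sat3 v r) ∧ n = {a : A | v a = TV.b}.ncard }

/-- The payoff of `α` in coalition `C` (w.r.t. rule base `B` and measure `I`). -/
noncomputable def CoalPayoff [DecidableEq A] (I : RuleBase A → ℝ) (B : RuleBase A)
    (α : Rule A) (C : RuleBase A) : ℝ :=
  ((Nat.factorial (C.card - 1) * Nat.factorial (B.card - C.card) : ℕ) : ℝ)
    / ((Nat.factorial B.card : ℕ) : ℝ) * (I C - I (C.erase α))

/-- The additional payoff shifted from facts to non-free rules. -/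
noncomputable def AddPayoff [DecidableEq A] (I : RuleBase A → ℝ) (B : RuleBase A)
    (r : Rule A) (C : RuleBase A) : ℝ :=
  if Free r C then 0
  else (∑ f ∈ C.filter (fun x => x.body = ∅), CoalPayoff I B f C)
        / ((C.filter (fun x => x.body ≠ ∅ ∧ ¬ Free x C)).card : ℝ)

/-- The adjusted Shapley inconsistency value. -/
noncomputable def Sstar [DecidableEq A] (I : RuleBase A → ℝ) (B : RuleBase A)
    (α : Rule A) : ℝ :=
  if α.body = ∅ then 0
  else ∑ C ∈ B.powerset, (CoalPayoff I B α C + AddPayoff I B α C)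

/-!
Take a minimal inconsistent `M ⊆ B` containing `r`. Every proper subset of `M` is consistent, so
`M.erase r` is rule consistent and `I (M.erase r) = 0`. Since `r` is not a fact, the facts of `M`
form a proper subset and are consistent, so rule consistency of `M` would make `M` itself
consistent; hence `I M > 0`. The coalition `M` therefore gives `r` a positive marginal payoff,
and monotonicity makes every other summand of `S*` nonnegative.
-/

lemma properRules_union_facts [DecidableEq A] (B : RuleBase A) :
    properRules B ∪ facts B = B := by
  rw [Finset.union_comm]
  exact Finset.filter_union_filter_not_eq _ B

lemma ruleConsistent_of_ssubset_of_mem_MI [DecidableEq A] {B M N : RuleBase A}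
    (hM : M ∈ MI B) (hN : N ⊂ M) : RuleConsistent N := by
  intro F' hF' _
  refine hM.2.2 _ (lt_of_le_of_lt ?_ hN)
  exact Finset.union_subset (Finset.filter_subset _ N) (hF'.trans (Finset.filter_subset _ N))

lemma not_ruleConsistent_of_mem_MI [DecidableEq A] {B M : RuleBase A} {r : Rule A}
    (hM : M ∈ MI B) (hr : r ∈ M) (hrule : r.body ≠ ∅) : ¬ RuleConsistent M := by
  intro hRC
  have hfacts : facts M ⊂ M :=
    Finset.ssubset_iff_subset_ne.mpr ⟨Finset.filter_subset _ M,
      fun h => hrule (Finset.mem_filter.mp (show r ∈ facts M by rwa [h])).2⟩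
  have hcons := hRC (facts M) subset_rfl (hM.2.2 _ hfacts)
  rw [properRules_union_facts] at hcons
  exact hM.2.1 hcons

section Payoffs

variable [DecidableEq A] {I : RuleBase A → ℝ} {B : RuleBase A}

lemma coalPayoff_nonneg (hI : Monotone I) (α : Rule A) (C : RuleBase A) :
    0 ≤ CoalPayoff I B α C :=
  mul_nonneg (by positivity) (sub_nonneg.mpr (hI (Finset.erase_subset α C)))

lemma coalPayoff_pos {α : Rule A} {C : RuleBase A} (h : I (C.erase α) < I C) :
    0 < CoalPayoff I B α C :=
  mul_pos (div_pos (by positivity) (by positivity)) (sub_pos.mpr h)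

lemma addPayoff_nonneg (hI : Monotone I) (r : Rule A) (C : RuleBase A) :
    0 ≤ AddPayoff I B r C := by
  unfold AddPayoff
  split_ifs
  · exact le_rfl
  · exact div_nonneg (Finset.sum_nonneg fun f _ => coalPayoff_nonneg hI f C) (Nat.cast_nonneg _)

lemma sstar_pos_of_erase_lt (hI : Monotone I) {r : Rule A} (hrule : r.body ≠ ∅)
    {C : RuleBase A} (hCB : C ⊆ B) (h : I (C.erase r) < I C) : 0 < Sstar I B r := by
  rw [Sstar, if_neg hrule]
  refine Finset.sum_pos' (fun D _ => add_nonneg (coalPayoff_nonneg hI r D)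
    (addPayoff_nonneg hI r D)) ⟨C, Finset.mem_powerset.mpr hCB, ?_⟩
  exact add_pos_of_pos_of_nonneg (coalPayoff_pos h) (addPayoff_nonneg hI r C)

end Payoffs

theorem stmt14_general [DecidableEq A] (I : RuleBase A → ℝ) (B : RuleBase A) (r : Rule A)
    (hMO : ∀ K K' : RuleBase A, K ⊆ K' → I K ≤ I K')
    (hRC : ∀ K : RuleBase A, I K = 0 ↔ RuleConsistent K)
    (hrule : r.body ≠ ∅) (hnotfree : ¬ Free r B) :
    Sstar I B r > 0 := by
  obtain ⟨M, hM, hrM⟩ : ∃ M ∈ MI B, r ∈ M := by simpa [Free] using hnotfree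
  have hI : Monotone I := hMO
  have herase : I (M.erase r) = 0 :=
    (hRC _).mpr (ruleConsistent_of_ssubset_of_mem_MI hM (Finset.erase_ssubset hrM))
  have hM0 : I M ≠ 0 := fun h => not_ruleConsistent_of_mem_MI hM hrM hrule ((hRC M).mp h)
  have hlt : I (M.erase r) < I M :=
    lt_of_le_of_ne (hI (Finset.erase_subset r M)) (herase ▸ hM0.symm)
  exact sstar_pos_of_erase_lt hI hrule hM.1 hlt

theorem stmt14 [DecidableEq A] (I : RuleBase A → ℝ) (B : RuleBase A) (r : Rule A)
    (hMO : ∀ K K' : RuleBase A, K ⊆ K' → I K ≤ I K')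
    (hRC : ∀ K : RuleBase A, I K = 0 ↔ RuleConsistent K)
    (hmem : r ∈ B) (hrule : r.body ≠ ∅) (hnotfree : ¬ Free r B) :
    Sstar I B r > 0 :=
  stmt14_general I B r hMO hRC hrule hnotfree
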